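/- arXiv:2506.07382 — 4 statements merged into one kernel-verified Lean document; each statement's English description precedes it below -/
import Mathlib

section
/- The Hausdorff content H^α_μ on a self-similar set K is strongly subadditive: for any sets E_1, E_2 ⊂ K, H^α_μ(E_1 ∪ E_2) + H^α_μ(E_1 ∩ E_2) ≤ H^α_μ(E_1) + H^α_μ(E_2). -/
/-! Two basic cubes are either disjoint or nested, by strong separation, and a strictly increasing
chain of cubes is finite, since a strictly larger cube has a shorter word. Given countable covers
`C₁` of `E₁` and `C₂` of `E₂`, the cubes of `C₁` lying in a cube of `C₂`, together with the cubes of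
`C₂` lying strictly in a cube of `C₁`, cover `E₁ ∩ E₂`. The remaining cubes still cover `E₁ ∪ E₂`:
a point lies in a maximal cube of `C₁ ∪ C₂` containing it, and that cube, or a cube of `C₂` equal
to it, is not removed. The two new covers split the disjoint union of `C₁` and `C₂`, and taking
infima over `C₁` and `C₂` gives the inequality. -/

open MeasureTheory Set Filter
open scoped ENNReal NNReal Topology

noncomputable section

abbrev Pt (d : ℕ) := EuclideanSpace ℝ (Fin d)

/-- An iterated function system of contractive similitudes on ℝ^d with attractor `K`
satisfying the strong separation condition. -/
structure IFS (d m : ℕ) where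
  S : Fin m → Pt d → Pt d
  r : Fin m → ℝ
  r_pos : ∀ i, 0 < r i
  r_lt_one : ∀ i, r i < 1
  similitude : ∀ i x y, dist (S i x) (S i y) = r i * dist x y
  K : Set (Pt d)
  K_nonempty : K.Nonempty
  K_compact : IsCompact K
  K_invariant : K = ⋃ i, S i '' K
  ssc : Pairwise fun i j => Disjoint (S i '' K) (S j '' K)

namespace IFS

variable {d m : ℕ}

/-- The composition `S_{i₁} ∘ ⋯ ∘ S_{iₙ}` for the word `w = i₁ ⋯ iₙ`. -/
def cylMap (Φ : IFS d m) (w : List (Fin m)) : Pt d → Pt d :=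
  w.foldr (fun i g => Φ.S i ∘ g) id

/-- The basic cube (cylinder set) `K_w = S_{i₁} ∘ ⋯ ∘ S_{iₙ}(K)`. -/
def cyl (Φ : IFS d m) (w : List (Fin m)) : Set (Pt d) :=
  Φ.cylMap w '' Φ.K

/-- `μ` is the self-similar probability measure associated with the probability
vector `p` (with all `p i > 0`), i.e. `μ = ∑ i, p i • μ ∘ S i ⁻¹`, supported on `K`. -/
def SelfSimilar (Φ : IFS d m) (p : Fin m → ℝ≥0∞) (μ : Measure (Pt d)) : Prop :=
  (∑ i, p i = 1) ∧ (∀ i, 0 < p i) ∧ IsProbabilityMeasure μ ∧ μ Φ.K = 1 ∧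
    μ = ∑ i, p i • μ.map (Φ.S i)

/-- The α-dimensional Hausdorff content on `K` associated with `μ`, defined via
coverings by countable families of basic cubes; `s` is the Hausdorff dimension of `K`. -/
def hContent (Φ : IFS d m) (μ : Measure (Pt d)) (s α : ℝ) (E : Set (Pt d)) : ℝ≥0∞ :=
  ⨅ (C : Set (List (Fin m))) (_ : C.Countable) (_ : E ⊆ ⋃ w ∈ C, Φ.cyl w),
    ∑' w : C, μ (Φ.cyl w.1) ^ (α / s)

/-- The dyadic-type Hardy–Littlewood maximal operator over basic cubes containing `x`. -/
def maxOp (Φ : IFS d m) (μ : Measure (Pt d)) (f : Pt d → ℝ) (x : Pt d) : ℝ≥0∞ :=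
  ⨆ (w : List (Fin m)) (_ : x ∈ Φ.cyl w),
    (μ (Φ.cyl w))⁻¹ * ∫⁻ y in Φ.cyl w, ENNReal.ofReal |f y| ∂μ

end IFS

/-- The Choquet integral of `g` over `E` with respect to the monotone set function `ν`. -/
def choquetInt {X : Type*} (ν : Set X → ℝ≥0∞) (E : Set X) (g : X → ℝ≥0∞) : ℝ≥0∞ :=
  ∫⁻ t in Set.Ioi (0 : ℝ), ν {x ∈ E | ENNReal.ofReal t < g x}

/-- `log⁺ t = max (0, log t)`. -/
def posLog (t : ℝ) : ℝ := max 0 (Real.log t)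

section CoverContent

variable {ι X : Type*} (c : ι → Set X)

def coverContent (f : ι → ℝ≥0∞) (E : Set X) : ℝ≥0∞ :=
  ⨅ (C : Set ι) (_ : C.Countable) (_ : E ⊆ ⋃ i ∈ C, c i), ∑' i : C, f i

def nestedIn (C D : Set ι) : Set ι := {i ∈ C | ∃ j ∈ D, c i ⊆ c j}

def strictlyNestedIn (C D : Set ι) : Set ι := {i ∈ C | ∃ j ∈ D, c i ⊂ c j}

variable {c}

theorem inter_subset_biUnion_nestedIn_union
    (hnest : ∀ i j, (c i ∩ c j).Nonempty → c i ⊆ c j ∨ c j ⊆ c i)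
    {E₁ E₂ : Set X} {C₁ C₂ : Set ι} (h₁ : E₁ ⊆ ⋃ i ∈ C₁, c i) (h₂ : E₂ ⊆ ⋃ i ∈ C₂, c i) :
    E₁ ∩ E₂ ⊆ ⋃ i ∈ nestedIn c C₁ C₂ ∪ strictlyNestedIn c C₂ C₁, c i := by
  rintro x ⟨hx₁, hx₂⟩
  obtain ⟨i, hi, hxi⟩ := mem_iUnion₂.mp (h₁ hx₁)
  obtain ⟨j, hj, hxj⟩ := mem_iUnion₂.mp (h₂ hx₂)
  by_cases hij : c i ⊆ c j
  · exact mem_biUnion (Or.inl ⟨hi, j, hj, hij⟩) hxi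
  · have hji : c j ⊂ c i := ssubset_of_subset_not_subset
      ((hnest i j ⟨x, hxi, hxj⟩).resolve_left hij) hij
    exact mem_biUnion (Or.inr ⟨hj, i, hi, hji⟩) hxj

theorem union_subset_biUnion_diff_union_diff (hwf : WellFounded fun i j => c j ⊂ c i)
    {E₁ E₂ : Set X} {C₁ C₂ : Set ι} (h₁ : E₁ ⊆ ⋃ i ∈ C₁, c i) (h₂ : E₂ ⊆ ⋃ i ∈ C₂, c i) :
    E₁ ∪ E₂ ⊆ ⋃ i ∈ (C₁ \ nestedIn c C₁ C₂) ∪ (C₂ \ strictlyNestedIn c C₂ C₁), c i := by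
  intro x hx
  have hne : {u ∈ C₁ ∪ C₂ | x ∈ c u}.Nonempty := by
    rcases hx with hx | hx
    · obtain ⟨i, hi, hxi⟩ := mem_iUnion₂.mp (h₁ hx)
      exact ⟨i, Or.inl hi, hxi⟩
    · obtain ⟨i, hi, hxi⟩ := mem_iUnion₂.mp (h₂ hx)
      exact ⟨i, Or.inr hi, hxi⟩
  obtain ⟨u, ⟨hu, hxu⟩, hmax⟩ := hwf.has_min _ hne
  have hkept : ∀ v, c u ⊆ c v → v ∉ strictlyNestedIn c C₂ C₁ := by
    rintro v huv ⟨-, w, hw, hvw⟩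
    exact hmax w ⟨Or.inl hw, hvw.subset (huv hxu)⟩ (huv.trans_ssubset hvw)
  rcases hu with hu | hu
  · by_cases hnested : u ∈ nestedIn c C₁ C₂
    · obtain ⟨-, v, hv, huv⟩ := hnested
      exact mem_biUnion (Or.inr ⟨hv, hkept v huv⟩) (huv hxu)
    · exact mem_biUnion (Or.inl ⟨hu, hnested⟩) hxu
  · exact mem_biUnion (Or.inr ⟨hu, hkept u subset_rfl⟩) hxu

variable (f : ι → ℝ≥0∞)

theorem coverContent_le_tsum {E : Set X} {C : Set ι} (hC : C.Countable)
    (hE : E ⊆ ⋃ i ∈ C, c i) : coverContent c f E ≤ ∑' i : C, f i :=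
  iInf_le_of_le C <| iInf_le_of_le hC <| iInf_le _ hE

theorem tsum_union_diff_add_tsum_union_le {C₁ C₂ A B : Set ι} (hA : A ⊆ C₁) (hB : B ⊆ C₂) :
    ∑' i : ↑((C₁ \ A) ∪ (C₂ \ B)), f i + ∑' i : ↑(A ∪ B), f i ≤
      ∑' i : C₁, f i + ∑' i : C₂, f i := by
  have hsplit : ∀ {C D : Set ι}, D ⊆ C → ∑' i : C, f i = ∑' i : ↑(C \ D), f i + ∑' i : D, f i :=
    fun hDC => by
      rw [← ENNReal.summable.tsum_union_disjoint disjoint_sdiff_left ENNReal.summable,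
        sdiff_union_of_subset hDC]
  calc ∑' i : ↑((C₁ \ A) ∪ (C₂ \ B)), f i + ∑' i : ↑(A ∪ B), f i
      ≤ (∑' i : ↑(C₁ \ A), f i + ∑' i : ↑(C₂ \ B), f i) + (∑' i : A, f i + ∑' i : B, f i) :=
        add_le_add (ENNReal.tsum_union_le _ _ _) (ENNReal.tsum_union_le _ _ _)
    _ = ∑' i : C₁, f i + ∑' i : C₂, f i := by
        rw [hsplit hA, hsplit hB]; ring

theorem coverContent_union_add_inter_le
    (hnest : ∀ i j, (c i ∩ c j).Nonempty → c i ⊆ c j ∨ c j ⊆ c i)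
    (hwf : WellFounded fun i j => c j ⊂ c i) (E₁ E₂ : Set X) :
    coverContent c f (E₁ ∪ E₂) + coverContent c f (E₁ ∩ E₂) ≤
      coverContent c f E₁ + coverContent c f E₂ := by
  refine ENNReal.le_iInf_add_iInf fun C₁ C₂ => ENNReal.le_iInf_add_iInf fun hC₁ hC₂ =>
    ENNReal.le_iInf_add_iInf fun h₁ h₂ => ?_
  have hA : nestedIn c C₁ C₂ ⊆ C₁ := fun _ hi => hi.1
  have hB : strictlyNestedIn c C₂ C₁ ⊆ C₂ := fun _ hi => hi.1
  calc coverContent c f (E₁ ∪ E₂) + coverContent c f (E₁ ∩ E₂)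
      ≤ ∑' i : ↑((C₁ \ nestedIn c C₁ C₂) ∪ (C₂ \ strictlyNestedIn c C₂ C₁)), f i +
          ∑' i : ↑(nestedIn c C₁ C₂ ∪ strictlyNestedIn c C₂ C₁), f i :=
        add_le_add
          (coverContent_le_tsum f ((hC₁.mono sdiff_subset).union (hC₂.mono sdiff_subset))
            (union_subset_biUnion_diff_union_diff hwf h₁ h₂))
          (coverContent_le_tsum f ((hC₁.mono hA).union (hC₂.mono hB))
            (inter_subset_biUnion_nestedIn_union hnest h₁ h₂))
    _ ≤ ∑' i : C₁, f i + ∑' i : C₂, f i := tsum_union_diff_add_tsum_union_le f hA hB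

end CoverContent

namespace IFS

variable {d m : ℕ} (Φ : IFS d m)

theorem S_injective (i : Fin m) : Function.Injective (Φ.S i) := fun x y h => by
  have hdist := Φ.similitude i x y
  rw [h, dist_self, zero_eq_mul] at hdist
  exact dist_eq_zero.mp (hdist.resolve_left (Φ.r_pos i).ne')

theorem cyl_cons (i : Fin m) (w : List (Fin m)) : Φ.cyl (i :: w) = Φ.S i '' Φ.cyl w :=
  image_comp (Φ.S i) (Φ.cylMap w) Φ.K

theorem cyl_nonempty (w : List (Fin m)) : (Φ.cyl w).Nonempty :=
  Φ.K_nonempty.image _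

theorem cyl_subset_K (w : List (Fin m)) : Φ.cyl w ⊆ Φ.K := by
  induction w with
  | nil => simp [cyl, cylMap]
  | cons i w ih =>
    rw [cyl_cons]
    calc Φ.S i '' Φ.cyl w ⊆ Φ.S i '' Φ.K := image_mono ih
      _ ⊆ Φ.K := (subset_iUnion (fun j => Φ.S j '' Φ.K) i).trans Φ.K_invariant.superset

theorem cylMap_append (v u : List (Fin m)) :
    Φ.cylMap (v ++ u) = Φ.cylMap v ∘ Φ.cylMap u := by
  induction v with
  | nil => rfl
  | cons i v ih => exact congrArg (Φ.S i ∘ ·) ih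

theorem cyl_subset_of_prefix {v w : List (Fin m)} (h : v <+: w) : Φ.cyl w ⊆ Φ.cyl v := by
  obtain ⟨u, rfl⟩ := h
  rw [cyl, cylMap_append, image_comp]
  exact image_mono (Φ.cyl_subset_K u)

/-- Strong separation: cylinders with distinct first letters are disjoint. -/
theorem prefix_of_cyl_inter_nonempty {w v : List (Fin m)} (h : (Φ.cyl w ∩ Φ.cyl v).Nonempty) :
    v <+: w ∨ w <+: v := by
  induction w generalizing v with
  | nil => exact Or.inr List.nil_prefix
  | cons i w ih =>
    cases v with
    | nil => exact Or.inl List.nil_prefix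
    | cons j v =>
      rw [cyl_cons, cyl_cons] at h
      obtain rfl | hij := eq_or_ne i j
      · rw [← image_inter (Φ.S_injective i)] at h
        exact (ih h.of_image).imp (List.cons_prefix_cons.mpr ⟨rfl, ·⟩)
          (List.cons_prefix_cons.mpr ⟨rfl, ·⟩)
      · obtain ⟨x, hxw, hxv⟩ := h
        exact absurd (image_mono (Φ.cyl_subset_K v) hxv)
          (disjoint_left.mp (Φ.ssc hij) (image_mono (Φ.cyl_subset_K w) hxw))

theorem cyl_nested (w v : List (Fin m)) (h : (Φ.cyl w ∩ Φ.cyl v).Nonempty) :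
    Φ.cyl w ⊆ Φ.cyl v ∨ Φ.cyl v ⊆ Φ.cyl w :=
  (Φ.prefix_of_cyl_inter_nonempty h).imp Φ.cyl_subset_of_prefix Φ.cyl_subset_of_prefix

theorem length_lt_of_cyl_ssubset {w v : List (Fin m)} (h : Φ.cyl v ⊂ Φ.cyl w) :
    w.length < v.length := by
  have hinter : (Φ.cyl v ∩ Φ.cyl w).Nonempty := by
    rw [inter_eq_left.mpr h.subset]; exact Φ.cyl_nonempty v
  obtain hwv | hvw := Φ.prefix_of_cyl_inter_nonempty hinter
  · refine hwv.length_le.lt_of_ne fun hlen => h.ne ?_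
    rw [hwv.eq_of_length hlen]
  · exact absurd (Φ.cyl_subset_of_prefix hvw) h.not_subset

theorem wellFounded_cyl_ssuperset : WellFounded fun w v => Φ.cyl v ⊂ Φ.cyl w :=
  Subrelation.wf (Φ.length_lt_of_cyl_ssubset ·) (InvImage.wf List.length wellFounded_lt)

theorem hContent_eq_coverContent (μ : Measure (Pt d)) (s α : ℝ) :
    Φ.hContent μ s α = coverContent Φ.cyl fun w => μ (Φ.cyl w) ^ (α / s) :=
  rfl

end IFS

theorem hContent_strongly_subadditive_general (d m : ℕ) (Φ : IFS d m)
    (μ : Measure (Pt d)) (s : ℝ) (α : ℝ) (E₁ E₂ : Set (Pt d)) :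
    Φ.hContent μ s α (E₁ ∪ E₂) + Φ.hContent μ s α (E₁ ∩ E₂) ≤
      Φ.hContent μ s α E₁ + Φ.hContent μ s α E₂ := by
  rw [Φ.hContent_eq_coverContent]
  exact coverContent_union_add_inter_le _ Φ.cyl_nested Φ.wellFounded_cyl_ssuperset E₁ E₂

/-- Strong subadditivity of the Hausdorff content. -/
theorem hContent_strongly_subadditive (d m : ℕ) (Φ : IFS d m) (p : Fin m → ℝ≥0∞)
    (μ : Measure (Pt d)) (hμ : Φ.SelfSimilar p μ)
    (s : ℝ) (hs : 0 < s) (hdim : ∑ i, Φ.r i ^ s = 1)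
    (α : ℝ) (hα : 0 < α) (hαs : α ≤ s)
    (E₁ E₂ : Set (Pt d)) (h₁ : E₁ ⊆ Φ.K) (h₂ : E₂ ⊆ Φ.K) :
    Φ.hContent μ s α (E₁ ∪ E₂) + Φ.hContent μ s α (E₁ ∩ E₂) ≤
      Φ.hContent μ s α E₁ + Φ.hContent μ s α E₂ :=
  hContent_strongly_subadditive_general d m Φ μ s α E₁ E₂
end
end

section
/- If a monotone set function ν on subsets of a set X is strongly subadditive (ν(A∪B)+ν(A∩B) ≤ ν(A)+ν(B)) and continuous from below along increasing sequences, then the associated Choquet integral is subadditive: ∫ (f+g) dν ≤ ∫ f dν + ∫ g dν for all nonnegative functions f, g. -/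
open MeasureTheory Set Filter
open scoped ENNReal NNReal Topology

noncomputable section

/-! Adding `c • 1_B` to `f` raises the Choquet integral by at most `c * ν B`: the level set
`{f + c • 1_B > t}` is `{f > t} ∪ (B ∩ {f + c > t})`, and strong subadditivity bounds its capacity
by that of `{f > t}` plus that of `B ∩ {f + c > t}` minus that of `B ∩ {f > t}`; integrating in `t`,
the last two integrals differ by at most `c * ν B`. Adding the layers of a staircase approximation
`g_n` of `g` one at a time gives `∫ (f + g_n) dν ≤ ∫ f dν + (a lower Riemann sum of ∫ g dν)`, and
continuity from below lets `g_n ↑ g` pass to the limit. -/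

section

variable {X : Type*} {ν : Set X → ℝ≥0∞}

lemma measurable_measure_levelSet (hmono : Monotone ν) (E : Set X)
    (g : X → ℝ≥0∞) : Measurable fun t : ℝ => ν {x ∈ E | ENNReal.ofReal t < g x} :=
  Antitone.measurable fun _ _ hst =>
    hmono fun _ hx => ⟨hx.1, (ENNReal.ofReal_le_ofReal hst).trans_lt hx.2⟩

lemma choquetInt_mono_set (hmono : Monotone ν) {E F : Set X}
    (hEF : E ⊆ F) (g : X → ℝ≥0∞) : choquetInt ν E g ≤ choquetInt ν F g :=
  lintegral_mono fun _ => hmono fun _ hx => ⟨hEF hx.1, hx.2⟩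

lemma choquetInt_add_const_le (hmono : Monotone ν) (E : Set X)
    (g : X → ℝ≥0∞) (c : ℝ≥0) :
    choquetInt ν E (fun x => g x + c) ≤ c * ν E + choquetInt ν E g := by
  rw [choquetInt, ← Ioc_union_Ioi_eq_Ioi c.coe_nonneg,
    lintegral_union measurableSet_Ioi (Ioc_disjoint_Ioi le_rfl)]
  gcongr ?_ + ?_
  · calc ∫⁻ t in Ioc 0 (c : ℝ), ν {x ∈ E | ENNReal.ofReal t < g x + c}
        ≤ ∫⁻ _ in Ioc 0 (c : ℝ), ν E := lintegral_mono fun _ => hmono (sep_subset _ _)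
      _ = c * ν E := by
        rw [setLIntegral_const, Real.volume_Ioc, sub_zero, ENNReal.ofReal_coe_nnreal, mul_comm]
  · have hshift := (measurePreserving_add_right volume (c : ℝ)).setLIntegral_comp_preimage_emb
      (measurableEmbedding_addRight _) (fun t => ν {x ∈ E | ENNReal.ofReal t < g x + c}) (Ioi c)
    rw [← hshift, preimage_add_const_Ioi, sub_self]
    refine (setLIntegral_congr_fun measurableSet_Ioi fun t ht => ?_).le
    simp only [ENNReal.ofReal_add (le_of_lt ht) c.coe_nonneg, ENNReal.ofReal_coe_nnreal,
      ENNReal.add_lt_add_iff_right ENNReal.coe_ne_top]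

lemma choquetInt_add_indicator_le (hmono : Monotone ν)
    (hssub : ∀ A B : Set X, ν (A ∪ B) + ν (A ∩ B) ≤ ν A + ν B)
    (f : X → ℝ≥0∞) (B : Set X) (c : ℝ≥0) :
    choquetInt ν univ (fun x => f x + B.indicator (fun _ => (c : ℝ≥0∞)) x) ≤
      choquetInt ν univ f + c * ν B := by
  have hlevel : ∀ t : ℝ,
      {x ∈ univ | ENNReal.ofReal t < f x + B.indicator (fun _ => (c : ℝ≥0∞)) x} =
        {x ∈ univ | ENNReal.ofReal t < f x} ∪ {x ∈ B | ENNReal.ofReal t < f x + c} := by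
    intro t
    ext x
    by_cases hx : x ∈ B
    · simp only [indicator_of_mem hx, mem_ofPred_eq, mem_union, mem_univ, true_and, hx]
      exact ⟨Or.inr, fun h => h.elim (fun h => h.trans_le le_self_add) id⟩
    · simp [hx]
  have hinter : ∀ t : ℝ,
      {x ∈ univ | ENNReal.ofReal t < f x} ∩ {x ∈ B | ENNReal.ofReal t < f x + c} =
        {x ∈ B | ENNReal.ofReal t < f x} := by
    intro t
    ext x
    simp only [mem_inter_iff, mem_ofPred_eq, mem_univ, true_and]
    exact ⟨fun h => ⟨h.2.1, h.1⟩, fun h => ⟨h.2, h.1, h.2.trans_le le_self_add⟩⟩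
  have hsum : choquetInt ν univ (fun x => f x + B.indicator (fun _ => (c : ℝ≥0∞)) x) +
      choquetInt ν B f ≤ choquetInt ν univ f + choquetInt ν B (fun x => f x + c) := by
    simp only [choquetInt]
    rw [← lintegral_add_left (measurable_measure_levelSet hmono _ _),
      ← lintegral_add_left (measurable_measure_levelSet hmono _ _)]
    refine lintegral_mono fun t => ?_
    rw [hlevel, ← hinter]
    exact hssub _ _
  by_cases htop : choquetInt ν B f = ⊤
  · have : choquetInt ν univ f = ⊤ :=
      top_le_iff.1 (htop ▸ choquetInt_mono_set hmono (subset_univ B) f)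
    simp [this]
  refine (ENNReal.add_le_add_iff_right htop).1 ?_
  calc _ ≤ choquetInt ν univ f + choquetInt ν B (fun x => f x + c) := hsum
    _ ≤ choquetInt ν univ f + (c * ν B + choquetInt ν B f) :=
      by gcongr; exact choquetInt_add_const_le hmono B f c
    _ = _ := (add_assoc _ _ _).symm

lemma choquetInt_add_sum_indicator_le (hmono : Monotone ν)
    (hssub : ∀ A B : Set X, ν (A ∪ B) + ν (A ∩ B) ≤ ν A + ν B) {ι : Type*}
    (s : Finset ι) (B : ι → Set X) (c : ι → ℝ≥0) (f : X → ℝ≥0∞) :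
    choquetInt ν univ (fun x => f x + ∑ i ∈ s, (B i).indicator (fun _ => (c i : ℝ≥0∞)) x) ≤
      choquetInt ν univ f + ∑ i ∈ s, c i * ν (B i) := by
  induction s using Finset.cons_induction with
  | empty => simp
  | cons i s hi ih =>
    calc choquetInt ν univ
          (fun x => f x + ∑ j ∈ s.cons i hi, (B j).indicator (fun _ => (c j : ℝ≥0∞)) x)
        = choquetInt ν univ (fun x =>
            (f x + ∑ j ∈ s, (B j).indicator (fun _ => (c j : ℝ≥0∞)) x) +
              (B i).indicator (fun _ => (c i : ℝ≥0∞)) x) := by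
          simp only [Finset.sum_cons, add_comm, add_left_comm]
      _ ≤ choquetInt ν univ
            (fun x => f x + ∑ j ∈ s, (B j).indicator (fun _ => (c j : ℝ≥0∞)) x) +
              c i * ν (B i) := choquetInt_add_indicator_le hmono hssub _ (B i) (c i)
      _ ≤ choquetInt ν univ f + ∑ j ∈ s, c j * ν (B j) + c i * ν (B i) := by gcongr
      _ = choquetInt ν univ f + ∑ j ∈ s.cons i hi, c j * ν (B j) := by
          rw [Finset.sum_cons, add_comm (c i * ν (B i)), add_assoc]

lemma sum_mul_measure_le_setLIntegral_Ico (hmono : Monotone ν) (g : X → ℝ≥0∞)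
    (e : ℝ≥0) (N : ℕ) :
    ∑ k ∈ Finset.range N, (e : ℝ≥0∞) * ν {y | (k + 1 : ℝ≥0∞) * e ≤ g y} ≤
      ∫⁻ t in Ico 0 (N * e : ℝ), ν {x ∈ univ | ENNReal.ofReal t < g x} := by
  induction N with
  | zero => simp
  | succ N ih =>
    have hsplit : Ico (0 : ℝ) ((N + 1 : ℕ) * e) =
        Ico (0 : ℝ) (N * e) ∪ Ico (N * e : ℝ) ((N + 1 : ℕ) * e) :=
      (Ico_union_Ico_eq_Ico (by positivity) (by gcongr; simp)).symm
    have hthreshold : (N + 1 : ℝ≥0∞) * e = ENNReal.ofReal ((N + 1 : ℕ) * e) := by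
      rw [ENNReal.ofReal_mul (by positivity), ENNReal.ofReal_natCast, ENNReal.ofReal_coe_nnreal]
      push_cast; rfl
    rw [Finset.sum_range_succ, hsplit, lintegral_union measurableSet_Ico Ico_disjoint_Ico_same]
    gcongr ?_ + ?_
    calc (e : ℝ≥0∞) * ν {y | (N + 1 : ℝ≥0∞) * e ≤ g y}
        = ∫⁻ _ in Ico (N * e : ℝ) ((N + 1 : ℕ) * e), ν {y | (N + 1 : ℝ≥0∞) * e ≤ g y} := by
          rw [setLIntegral_const, Real.volume_Ico,
            show ((N + 1 : ℕ) : ℝ) * e - N * e = e by push_cast; ring,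
            ENNReal.ofReal_coe_nnreal, mul_comm]
      _ ≤ _ := by
          refine setLIntegral_mono (measurable_measure_levelSet hmono _ _) fun t ht =>
            hmono fun y hy => ⟨mem_univ y, lt_of_lt_of_le ?_ hy⟩
          rw [hthreshold]
          exact (ENNReal.ofReal_lt_ofReal_iff_of_nonneg
            ((by positivity : (0 : ℝ) ≤ N * e).trans ht.1)).2 ht.2

lemma sum_mul_measure_le_choquetInt (hmono : Monotone ν) (g : X → ℝ≥0∞)
    (e : ℝ≥0) (N : ℕ) :
    ∑ k ∈ Finset.range N, (e : ℝ≥0∞) * ν {y | (k + 1 : ℝ≥0∞) * e ≤ g y} ≤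
      choquetInt ν univ g :=
  calc _ ≤ ∫⁻ t in Ico 0 (N * e : ℝ), ν {x ∈ univ | ENNReal.ofReal t < g x} :=
        sum_mul_measure_le_setLIntegral_Ico hmono g e N
    _ ≤ ∫⁻ t in Ici 0, ν {x ∈ univ | ENNReal.ofReal t < g x} :=
      lintegral_mono_set Ico_subset_Ici_self
    _ = choquetInt ν univ g := setLIntegral_congr Ioi_ae_eq_Ici.symm

lemma choquetInt_iSup (hmono : Monotone ν)
    (hcont : ∀ A : ℕ → Set X, Monotone A →
      Tendsto (fun n => ν (A n)) atTop (𝓝 (ν (⋃ n, A n))))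
    (E : Set X) {h : ℕ → X → ℝ≥0∞} (hh : Monotone h) :
    choquetInt ν E (fun x => ⨆ n, h n x) = ⨆ n, choquetInt ν E (h n) := by
  have hlevel : ∀ t : ℝ, Monotone fun n => {x ∈ E | ENNReal.ofReal t < h n x} :=
    fun t m n hmn x hx => ⟨hx.1, hx.2.trans_le (hh hmn x)⟩
  have hunion : ∀ t : ℝ, {x ∈ E | ENNReal.ofReal t < ⨆ n, h n x} =
      ⋃ n, {x ∈ E | ENNReal.ofReal t < h n x} := by
    intro t
    ext x
    simp [lt_iSup_iff]
  refine (lintegral_congr fun t => ?_).trans (lintegral_iSup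
    (fun n => measurable_measure_levelSet hmono E (h n)) fun m n hmn t => hmono (hlevel t hmn))
  rw [hunion]
  exact tendsto_nhds_unique (hcont _ (hlevel t))
    (tendsto_atTop_iSup fun m n hmn => hmono (hlevel t hmn))

/-- `stairApprox g e N x = e * min N ⌊g x / e⌋`, with `⌊⊤ / e⌋ = ⊤`. -/
def stairApprox (g : X → ℝ≥0∞) (e : ℝ≥0) (N : ℕ) (x : X) : ℝ≥0∞ :=
  ∑ k ∈ Finset.range N, {y | (k + 1 : ℝ≥0∞) * e ≤ g y}.indicator (fun _ => (e : ℝ≥0∞)) x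

lemma stairApprox_le_mul (g : X → ℝ≥0∞) (e : ℝ≥0) (N : ℕ) (x : X) :
    stairApprox g e N x ≤ N * e := by
  simpa [stairApprox] using Finset.sum_le_card_nsmul (Finset.range N) _ (e : ℝ≥0∞)
    fun k _ => indicator_le_self' (fun _ _ => zero_le) x

lemma stairApprox_le (g : X → ℝ≥0∞) (e : ℝ≥0) (N : ℕ) (x : X) : stairApprox g e N x ≤ g x := by
  induction N with
  | zero => simp [stairApprox]
  | succ N ih =>
    rw [stairApprox, Finset.sum_range_succ, ← stairApprox]
    by_cases hx : x ∈ {y | (N + 1 : ℝ≥0∞) * e ≤ g y}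
    · rw [Set.indicator_of_mem hx]
      calc stairApprox g e N x + e ≤ N * e + e := by gcongr; exact stairApprox_le_mul g e N x
        _ = (N + 1 : ℝ≥0∞) * e := by ring
        _ ≤ g x := hx
    · rwa [Set.indicator_of_notMem hx, add_zero]

lemma le_stairApprox (g : X → ℝ≥0∞) (e : ℝ≥0) {M N : ℕ} (hMN : M ≤ N) {x : X}
    (hM : (M : ℝ≥0∞) * e ≤ g x) : (M : ℝ≥0∞) * e ≤ stairApprox g e N x := by
  calc (M : ℝ≥0∞) * e = ∑ k ∈ Finset.range M, {y | (k + 1 : ℝ≥0∞) * e ≤ g y}.indicator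
        (fun _ => (e : ℝ≥0∞)) x := by
        refine Eq.symm ((Finset.sum_eq_card_nsmul fun k hk => Set.indicator_of_mem ?_ _).trans
          (by simp))
        refine le_trans ?_ hM
        gcongr
        exact_mod_cast Finset.mem_range.1 hk
    _ ≤ stairApprox g e N x :=
        Finset.sum_le_sum_of_subset (Finset.range_subset_range.2 hMN)

lemma exists_stairApprox_eq_mul (g : X → ℝ≥0∞) (e : ℝ≥0) (N : ℕ) (x : X) :
    ∃ M ≤ N, stairApprox g e N x = M * e := by
  induction N with
  | zero => exact ⟨0, le_rfl, by simp [stairApprox]⟩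
  | succ N ih =>
    obtain ⟨M, hMN, hM⟩ := ih
    rw [stairApprox, Finset.sum_range_succ, ← stairApprox, hM]
    by_cases hx : x ∈ {y | (N + 1 : ℝ≥0∞) * e ≤ g y}
    · exact ⟨M + 1, by omega, by rw [Set.indicator_of_mem hx]; push_cast; ring⟩
    · exact ⟨M, by omega, by rw [Set.indicator_of_notMem hx, add_zero]⟩

lemma stairApprox_le_stairApprox (g : X → ℝ≥0∞) {e e' : ℝ≥0} {k N N' : ℕ} (he : e = k * e')
    (hN : k * N ≤ N') (x : X) : stairApprox g e N x ≤ stairApprox g e' N' x := by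
  obtain ⟨M, hMN, hM⟩ := exists_stairApprox_eq_mul g e N x
  have hMe : stairApprox g e N x = ((k * M : ℕ) : ℝ≥0∞) * e' := by
    rw [hM, he]; push_cast; ring
  rw [hMe]
  exact le_stairApprox g e' ((Nat.mul_le_mul_left k hMN).trans hN)
    (hMe ▸ stairApprox_le g e N x)

def dyadicApprox (g : X → ℝ≥0∞) (n : ℕ) : X → ℝ≥0∞ :=
  stairApprox g (2⁻¹ ^ n) (n * 2 ^ n)

lemma monotone_dyadicApprox (g : X → ℝ≥0∞) : Monotone (dyadicApprox g) :=
  monotone_nat_of_le_succ fun n x => stairApprox_le_stairApprox g (k := 2)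
    (by rw [pow_succ, Nat.cast_ofNat, mul_left_comm, mul_inv_cancel₀ two_ne_zero, mul_one])
    (by ring_nf; omega) x

lemma NNReal.exists_nat_mul_inv_two_pow_mem_Ioc {b r : ℝ≥0} (hbr : b < r) :
    ∃ n M : ℕ, M ≤ n * 2 ^ n ∧ b < M * 2⁻¹ ^ n ∧ M * 2⁻¹ ^ n ≤ r := by
  obtain ⟨n₀, hn₀⟩ := exists_pow_lt_of_lt_one (tsub_pos_of_lt hbr) (two_inv_lt_one (α := ℝ≥0))
  set n := max n₀ ⌈r⌉₊
  set e : ℝ≥0 := 2⁻¹ ^ n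
  have he : e < r - b :=
    (pow_le_pow_of_le_one zero_le two_inv_lt_one.le (le_max_left _ _)).trans_lt hn₀
  have hscale : (2 : ℝ≥0) ^ n * e = 1 := by rw [← mul_pow, mul_inv_cancel₀ two_ne_zero, one_pow]
  set M := ⌊r * 2 ^ n⌋₊
  refine ⟨n, M, Nat.floor_le_of_le ?_, ?_, ?_⟩
  · push_cast
    gcongr
    exact (Nat.le_ceil r).trans (by exact_mod_cast le_max_right _ _)
  · have hrM : r < M * e + e := by
      calc r = r * 2 ^ n * e := by rw [mul_assoc, hscale, mul_one]
        _ < (M + 1) * e := by gcongr; exact Nat.lt_floor_add_one _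
        _ = M * e + e := add_one_mul _ _
    exact lt_of_add_lt_add_right ((lt_tsub_iff_left.1 he).trans hrM)
  · calc (M : ℝ≥0) * e ≤ r * 2 ^ n * e := by gcongr; exact Nat.floor_le zero_le
      _ = r := by rw [mul_assoc, hscale, mul_one]

lemma iSup_dyadicApprox (g : X → ℝ≥0∞) (x : X) : ⨆ n, dyadicApprox g n x = g x := by
  refine le_antisymm (iSup_le fun n => stairApprox_le _ _ _ _) (le_of_forall_lt fun b hb => ?_)
  obtain ⟨r, hbr, hrg⟩ := ENNReal.lt_iff_exists_nnreal_btwn.1 hb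
  lift b to ℝ≥0 using hbr.ne_top
  obtain ⟨n, M, hMN, hbM, hMr⟩ :=
    NNReal.exists_nat_mul_inv_two_pow_mem_Ioc (ENNReal.coe_lt_coe.1 hbr)
  refine lt_iSup_iff.2 ⟨n, ?_⟩
  calc (b : ℝ≥0∞) < (M : ℝ≥0∞) * ((2⁻¹ ^ n : ℝ≥0) : ℝ≥0∞) := by
        rw [← ENNReal.coe_natCast, ← ENNReal.coe_mul]; exact_mod_cast hbM
    _ ≤ dyadicApprox g n x := le_stairApprox g _ hMN <| by
        rw [← ENNReal.coe_natCast, ← ENNReal.coe_mul]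
        exact (ENNReal.coe_le_coe.2 hMr).trans hrg.le

end

theorem choquet_subadditive_general {X : Type*} (ν : Set X → ℝ≥0∞)
    (hmono : ∀ A B : Set X, A ⊆ B → ν A ≤ ν B)
    (hssub : ∀ A B : Set X, ν (A ∪ B) + ν (A ∩ B) ≤ ν A + ν B)
    (hcont : ∀ A : ℕ → Set X, Monotone A →
      Tendsto (fun n => ν (A n)) atTop (𝓝 (ν (⋃ n, A n))))
    (f g : X → ℝ≥0∞) :
    choquetInt ν Set.univ (fun x => f x + g x) ≤
      choquetInt ν Set.univ f + choquetInt ν Set.univ g := by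
  have hν : Monotone ν := fun A B hAB => hmono A B hAB
  have hlimit : (fun x => f x + g x) = fun x => ⨆ n, f x + dyadicApprox g n x := by
    simp only [← ENNReal.add_iSup, iSup_dyadicApprox]
  rw [hlimit, choquetInt_iSup hν hcont univ
    fun m n hmn x => add_le_add_right (monotone_dyadicApprox g hmn x) (f x)]
  refine iSup_le fun n => ?_
  calc choquetInt ν univ (fun x => f x + dyadicApprox g n x)
      ≤ choquetInt ν univ f + ∑ k ∈ Finset.range (n * 2 ^ n),
          ((2⁻¹ ^ n : ℝ≥0) : ℝ≥0∞) * ν {y | (k + 1 : ℝ≥0∞) * (2⁻¹ ^ n : ℝ≥0) ≤ g y} :=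
        choquetInt_add_sum_indicator_le hν hssub _ _ _ f
    _ ≤ choquetInt ν univ f + choquetInt ν univ g := by
        gcongr; exact sum_mul_measure_le_choquetInt hν g _ _

/-- If a monotone set function is strongly subadditive and continuous from below, then
its Choquet integral is subadditive. -/
theorem choquet_subadditive {X : Type*} (ν : Set X → ℝ≥0∞) (hν0 : ν ∅ = 0)
    (hmono : ∀ A B : Set X, A ⊆ B → ν A ≤ ν B)
    (hssub : ∀ A B : Set X, ν (A ∪ B) + ν (A ∩ B) ≤ ν A + ν B)
    (hcont : ∀ A : ℕ → Set X, Monotone A →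
      Tendsto (fun n => ν (A n)) atTop (𝓝 (ν (⋃ n, A n))))
    (f g : X → ℝ≥0∞) :
    choquetInt ν Set.univ (fun x => f x + g x) ≤
      choquetInt ν Set.univ f + choquetInt ν Set.univ g :=
  choquet_subadditive_general ν hmono hssub hcont f g
end
end

section
/- Let 0 < α ≤ s and α/s < p < ∞. For any basic cube K_i of the self-similar set K, the Choquet integral of the p-th power of the maximal function of its indicator satisfies ∫ [M^μ_D(χ_{K_i})]^p dH^α_μ ≤ (2p/(p − α/s)) μ(K_i)^{α/s}. -/
open MeasureTheory Set Filter
open scoped ENNReal NNReal Topology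

noncomputable section

/-!
If `0 < τ ≤ 1` and `x` lies in a basic cube `K_v` on which `χ_{K_w}` has average `> τ`, then
`K_v` meets `K_w`, so either `K_v ⊆ K_w` or `K_v` is an ancestor of `K_w` with
`μ(K_v) < μ(K_w) / τ`. Hence the superlevel set `{M χ_{K_w} > τ}` lies in the largest
ancestor `K_v` of `K_w` with `μ(K_v) ≤ μ(K_w) / τ`, and covering it by that single cube gives
`H^α_μ {(M χ_{K_w})^p > t} ≤ μ(K_w)^{α/s} t^{-α/(sp)}` for `0 < t ≤ 1`. Since `M χ_{K_w} ≤ 1`,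
the Choquet integral is at most `μ(K_w)^{α/s} ∫₀¹ t^{-α/(sp)} dt = p/(p - α/s) · μ(K_w)^{α/s}`.
-/

namespace IFS

variable {d m : ℕ} (Φ : IFS d m)

theorem continuous_S (i : Fin m) : Continuous (Φ.S i) :=
  (LipschitzWith.of_dist_le_mul (K := (Φ.r i).toNNReal) fun x y => by
    rw [Φ.similitude, Real.coe_toNNReal _ (Φ.r_pos i).le]).continuous

theorem continuous_cylMap (w : List (Fin m)) : Continuous (Φ.cylMap w) := by
  induction w with
  | nil => exact continuous_id
  | cons i w ih => exact (Φ.continuous_S i).comp ih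

theorem cyl_nil : Φ.cyl [] = Φ.K := image_id _

theorem measurableSet_cyl (w : List (Fin m)) : MeasurableSet (Φ.cyl w) :=
  (Φ.K_compact.image (Φ.continuous_cylMap w)).isClosed.measurableSet

theorem cyl_subset_cyl_of_prefix {u v : List (Fin m)} (h : u <+: v) : Φ.cyl v ⊆ Φ.cyl u := by
  obtain ⟨t, rfl⟩ := h
  induction u with
  | nil => rw [List.nil_append, cyl_nil]; exact Φ.cyl_subset_K t
  | cons i u ih =>
    rw [List.cons_append, cyl_cons, cyl_cons]
    exact image_mono ih

/-- Strong separation makes basic cubes nested or disjoint. -/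
theorem prefix_or_prefix_of_cyl_inter_nonempty :
    ∀ {u v : List (Fin m)}, (Φ.cyl u ∩ Φ.cyl v).Nonempty → u <+: v ∨ v <+: u
  | [], _, _ => Or.inl List.nil_prefix
  | _ :: _, [], _ => Or.inr List.nil_prefix
  | i :: u, j :: v, ⟨x, hxu, hxv⟩ => by
    rw [cyl_cons] at hxu hxv
    obtain ⟨y, hyu, rfl⟩ := hxu
    obtain ⟨z, hzv, hzy⟩ := hxv
    obtain rfl | hij := eq_or_ne i j
    · simpa only [List.cons_prefix_cons, true_and] using
        prefix_or_prefix_of_cyl_inter_nonempty ⟨y, hyu, Φ.S_injective i hzy ▸ hzv⟩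
    · exact absurd hzy.symm ((Φ.ssc hij).ne_of_mem (image_mono (Φ.cyl_subset_K u) ⟨y, hyu, rfl⟩)
        (image_mono (Φ.cyl_subset_K v) ⟨z, hzv, rfl⟩))

theorem hContent_empty (μ : Measure (Pt d)) (s α : ℝ) : Φ.hContent μ s α ∅ = 0 :=
  nonpos_iff_eq_zero.mp <| (iInf₂_le ∅ countable_empty).trans <|
    (iInf_le _ (empty_subset _)).trans_eq tsum_empty

theorem hContent_le_of_subset_cyl (μ : Measure (Pt d)) (s α : ℝ) {E : Set (Pt d)}
    {v : List (Fin m)} (h : E ⊆ Φ.cyl v) : Φ.hContent μ s α E ≤ μ (Φ.cyl v) ^ (α / s) :=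
  (iInf₂_le {v} (countable_singleton v)).trans <|
    (iInf_le _ (by simpa using h)).trans_eq (tsum_singleton v fun u => μ (Φ.cyl u) ^ (α / s))

variable (μ : Measure (Pt d))

theorem maxOp_indicator_cyl (w : List (Fin m)) (x : Pt d) :
    Φ.maxOp μ ((Φ.cyl w).indicator fun _ => (1 : ℝ)) x =
      ⨆ (v : List (Fin m)) (_ : x ∈ Φ.cyl v), (μ (Φ.cyl v))⁻¹ * μ (Φ.cyl w ∩ Φ.cyl v) := by
  have hind : (fun y => ENNReal.ofReal |(Φ.cyl w).indicator (fun _ => (1 : ℝ)) y|) =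
      (Φ.cyl w).indicator 1 := by
    ext y
    by_cases hy : y ∈ Φ.cyl w <;> simp [hy]
  simp only [maxOp, hind, lintegral_indicator_one (Φ.measurableSet_cyl w),
    Measure.restrict_apply (Φ.measurableSet_cyl w)]

theorem maxOp_indicator_cyl_le_one (w : List (Fin m)) (x : Pt d) :
    Φ.maxOp μ ((Φ.cyl w).indicator fun _ => (1 : ℝ)) x ≤ 1 := by
  rw [maxOp_indicator_cyl]
  refine iSup₂_le fun v _ => ?_
  rw [mul_comm, ← div_eq_mul_inv]
  exact ENNReal.div_le_of_le_mul (by simpa using measure_mono inter_subset_right)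

theorem exists_cyl_superset_superlevel_maxOp_indicator [IsFiniteMeasure μ] (w : List (Fin m))
    {τ : ℝ≥0∞} (hτ0 : τ ≠ 0) (hτ1 : τ ≤ 1) :
    ∃ v, {x | τ < Φ.maxOp μ ((Φ.cyl w).indicator fun _ => (1 : ℝ)) x} ⊆ Φ.cyl v ∧
      μ (Φ.cyl v) ≤ μ (Φ.cyl w) / τ := by
  classical
  have hτtop : τ ≠ ∞ := ne_top_of_le_ne_top ENNReal.one_ne_top hτ1
  have hw : ∃ n, μ (Φ.cyl (w.take n)) ≤ μ (Φ.cyl w) / τ := ⟨w.length, by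
    rw [List.take_length, ENNReal.le_div_iff_mul_le (.inl hτ0) (.inl hτtop)]
    exact mul_le_of_le_one_right' hτ1⟩
  refine ⟨w.take (Nat.find hw), fun x hx => ?_, Nat.find_spec hw⟩
  obtain ⟨v, hxv, hτv⟩ : ∃ v, x ∈ Φ.cyl v ∧ τ < (μ (Φ.cyl v))⁻¹ * μ (Φ.cyl w ∩ Φ.cyl v) := by
    simpa [maxOp_indicator_cyl, lt_iSup_iff] using hx
  have hwv : μ (Φ.cyl w ∩ Φ.cyl v) ≠ 0 := fun h => by simp [h] at hτv
  rcases Φ.prefix_or_prefix_of_cyl_inter_nonempty (nonempty_of_measure_ne_zero hwv) with h | h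
  · exact Φ.cyl_subset_cyl_of_prefix ((List.take_prefix _ w).trans h) hxv
  · rw [inter_eq_left.mpr (Φ.cyl_subset_cyl_of_prefix h)] at hwv hτv
    have hv : μ (Φ.cyl v) ≤ μ (Φ.cyl w) / τ := by
      rw [mul_comm, ← div_eq_mul_inv] at hτv
      rw [ENNReal.le_div_iff_mul_le (.inl hτ0) (.inl hτtop), mul_comm, ←
        ENNReal.le_div_iff_mul_le (.inr hwv) (.inl (measure_ne_top μ _))]
      exact hτv.le
    have hN : Nat.find hw ≤ v.length :=
      Nat.find_min' hw (by rwa [← List.prefix_iff_eq_take.mp h])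
    refine Φ.cyl_subset_cyl_of_prefix ?_ hxv
    rw [List.prefix_iff_eq_take.mp h]
    exact List.take_prefix_take_left hN

theorem hContent_superlevel_maxOp_indicator_rpow_le [IsFiniteMeasure μ] (s α : ℝ)
    (hθ : 0 ≤ α / s) {p : ℝ} (hp : 0 < p) (E : Set (Pt d)) (w : List (Fin m)) {t : ℝ}
    (ht : t ∈ Ioc (0 : ℝ) 1) :
    Φ.hContent μ s α
        {x ∈ E | ENNReal.ofReal t < Φ.maxOp μ ((Φ.cyl w).indicator fun _ => (1 : ℝ)) x ^ p} ≤
      μ (Φ.cyl w) ^ (α / s) * ENNReal.ofReal t ^ (-(α / s / p)) := by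
  have ht0 : ENNReal.ofReal t ≠ 0 := (ENNReal.ofReal_pos.2 ht.1).ne'
  obtain ⟨v, hsub, hv⟩ := Φ.exists_cyl_superset_superlevel_maxOp_indicator μ w
    (τ := ENNReal.ofReal t ^ p⁻¹) (by simp [ht0])
    (ENNReal.rpow_le_one (ENNReal.ofReal_le_one.2 ht.2) (inv_nonneg.2 hp.le))
  calc _ ≤ μ (Φ.cyl v) ^ (α / s) :=
        Φ.hContent_le_of_subset_cyl μ s α fun x hx => hsub ((ENNReal.rpow_inv_lt_iff hp).2 hx.2)
    _ ≤ (μ (Φ.cyl w) / ENNReal.ofReal t ^ p⁻¹) ^ (α / s) := by gcongr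
    _ = _ := by
      rw [ENNReal.div_rpow_of_nonneg _ _ hθ, ← ENNReal.rpow_mul, div_eq_mul_inv,
        ← ENNReal.rpow_neg, inv_mul_eq_div]

theorem hContent_superlevel_maxOp_indicator_rpow_eq_zero (s α : ℝ) {p : ℝ} (hp : 0 ≤ p)
    (E : Set (Pt d)) (w : List (Fin m)) {t : ℝ} (ht : 1 < t) :
    Φ.hContent μ s α
        {x ∈ E | ENNReal.ofReal t < Φ.maxOp μ ((Φ.cyl w).indicator fun _ => (1 : ℝ)) x ^ p} =
      0 := by
  convert Φ.hContent_empty μ s α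
  refine eq_empty_of_forall_notMem fun x hx => ?_
  have hM := ENNReal.rpow_le_one (Φ.maxOp_indicator_cyl_le_one μ w x) hp
  exact (hx.2.trans_le hM).not_ge (ENNReal.one_le_ofReal.2 ht.le)

end IFS

theorem lintegral_Ioc_zero_one_ofReal_rpow {r : ℝ} (hr : -1 < r) :
    ∫⁻ t in Ioc (0 : ℝ) 1, ENNReal.ofReal t ^ r = ENNReal.ofReal (1 / (r + 1)) := by
  have hint : IntegrableOn (fun t : ℝ => t ^ r) (Ioc 0 1) := by
    simpa [intervalIntegrable_iff_integrableOn_Ioc_of_le zero_le_one] using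
      intervalIntegral.intervalIntegrable_rpow' (a := 0) (b := 1) hr
  rw [setLIntegral_congr_fun measurableSet_Ioc fun t ht => ENNReal.ofReal_rpow_of_pos ht.1,
    ← ofReal_integral_eq_lintegral_ofReal hint
      ((ae_restrict_iff' measurableSet_Ioc).2
        (ae_of_all _ fun t (ht : t ∈ Ioc (0 : ℝ) 1) => Real.rpow_nonneg ht.1.le _)),
    ← intervalIntegral.integral_of_le zero_le_one, integral_rpow (.inl hr), Real.one_rpow,
    Real.zero_rpow (by linarith), sub_zero]

theorem choquetInt_le_of_le_rpow_neg {X : Type*} {ν : Set X → ℝ≥0∞} {E : Set X}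
    {g : X → ℝ≥0∞} {c : ℝ≥0∞} {β : ℝ} (hβ : β < 1)
    (hle : ∀ t ∈ Ioc (0 : ℝ) 1, ν {x ∈ E | ENNReal.ofReal t < g x} ≤ c * ENNReal.ofReal t ^ (-β))
    (hzero : ∀ t : ℝ, 1 < t → ν {x ∈ E | ENNReal.ofReal t < g x} = 0) :
    choquetInt ν E g ≤ c * ENNReal.ofReal (1 / (1 - β)) := by
  calc choquetInt ν E g
      ≤ ∫⁻ t in Ioi (0 : ℝ), (Ioc 0 1).indicator (fun t => c * ENNReal.ofReal t ^ (-β)) t := by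
        refine setLIntegral_mono' measurableSet_Ioi fun t ht => ?_
        rcases le_or_gt t 1 with ht1 | ht1
        · rw [indicator_of_mem (show t ∈ Ioc 0 1 from ⟨ht, ht1⟩)]
          exact hle t ⟨ht, ht1⟩
        · rw [hzero t ht1]
          exact zero_le
    _ = c * ∫⁻ t in Ioc (0 : ℝ) 1, ENNReal.ofReal t ^ (-β) := by
        rw [lintegral_indicator measurableSet_Ioc, Measure.restrict_restrict measurableSet_Ioc,
          inter_eq_left.mpr Ioc_subset_Ioi_self,
          lintegral_const_mul _ (ENNReal.measurable_ofReal.pow_const _)]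
    _ = c * ENNReal.ofReal (1 / (1 - β)) := by
        rw [lintegral_Ioc_zero_one_ofReal_rpow (by linarith), neg_add_eq_sub]

theorem maxOp_indicator_general (d m : ℕ) (Φ : IFS d m) (pv : Fin m → ℝ≥0∞)
    (μ : Measure (Pt d)) (hμ : Φ.SelfSimilar pv μ)
    (s : ℝ) (hs : 0 < s)
    (α : ℝ) (hα : 0 < α)
    (p : ℝ) (hp : α / s < p) (w : List (Fin m)) :
    choquetInt (Φ.hContent μ s α) Φ.K
        (fun x => Φ.maxOp μ ((Φ.cyl w).indicator fun _ => (1 : ℝ)) x ^ p) ≤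
      ENNReal.ofReal (2 * p / (p - α / s)) * μ (Φ.cyl w) ^ (α / s) := by
  have : IsProbabilityMeasure μ := hμ.2.2.1
  have hθ : 0 < α / s := div_pos hα hs
  have hp0 : 0 < p := hθ.trans hp
  calc _ ≤ μ (Φ.cyl w) ^ (α / s) * ENNReal.ofReal (1 / (1 - α / s / p)) :=
        choquetInt_le_of_le_rpow_neg ((div_lt_one hp0).mpr hp)
          (fun _ ht => Φ.hContent_superlevel_maxOp_indicator_rpow_le μ s α hθ.le hp0 Φ.K w ht)
          (fun _ ht => Φ.hContent_superlevel_maxOp_indicator_rpow_eq_zero μ s α hp0.le Φ.K w ht)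
    _ ≤ _ := by
      rw [mul_comm, one_sub_div hp0.ne', one_div_div]
      gcongr
      linarith

/-- Key estimate: the Choquet integral of the `p`-th power of the maximal function of the
indicator of a basic cube is bounded by `(2p/(p - α/s)) μ(K_w)^{α/s}`. -/
theorem maxOp_indicator (d m : ℕ) (Φ : IFS d m) (pv : Fin m → ℝ≥0∞)
    (μ : Measure (Pt d)) (hμ : Φ.SelfSimilar pv μ)
    (s : ℝ) (hs : 0 < s) (hdim : ∑ i, Φ.r i ^ s = 1)
    (α : ℝ) (hα : 0 < α) (hαs : α ≤ s)
    (p : ℝ) (hp : α / s < p) (w : List (Fin m)) :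
    choquetInt (Φ.hContent μ s α) Φ.K
        (fun x => Φ.maxOp μ ((Φ.cyl w).indicator fun _ => (1 : ℝ)) x ^ p) ≤
      ENNReal.ofReal (2 * p / (p - α / s)) * μ (Φ.cyl w) ^ (α / s) :=
  maxOp_indicator_general d m Φ pv μ hμ s hs α hα p hp w
end
end

section
/- Let 0 < α ≤ s and f ≥ 0 be μ-measurable. For any basic cube I of K, ∫_I f dμ ≤ (s/α) ( ∫_I f^{α/s} dH^α_μ )^{s/α}. -/
open MeasureTheory Set Filter
open scoped ENNReal NNReal Topology

noncomputable section

/-!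
Put `θ = α / s ∈ (0, 1]` and let `H` be the content. Since `H(E)` is an infimum over covers of `E`
by basic cubes and `(∑ aᵢ) ^ θ ≤ ∑ aᵢ ^ θ`, we have `μ E ≤ H(E) ^ (1/θ)` for every `E`.
By the layer-cake formula and the substitution `t = u ^ (1/θ)`,
`∫_I f dμ ≤ (1/θ) ∫₀^∞ u ^ (1/θ - 1) μ{x ∈ I | f x ^ θ > u} du`. With `h(u) = H{x ∈ I | f x ^ θ > u}`
and `A = ∫₀^∞ h`, Chebyshev's inequality `u h(u) ≤ A` (`h` is antitone) gives
`u ^ (1/θ - 1) μ{…} ≤ u ^ (1/θ - 1) h(u) ^ (1/θ) ≤ A ^ (1/θ - 1) h(u)`, and integrating in `u`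
yields `(1/θ) A ^ (1/θ)`.
-/

namespace ENNReal

theorem rpow_sum_le_sum_rpow {ι : Type*} (a : ι → ℝ≥0∞) (s : Finset ι) {θ : ℝ} (hθ0 : 0 < θ)
    (hθ1 : θ ≤ 1) : (∑ i ∈ s, a i) ^ θ ≤ ∑ i ∈ s, a i ^ θ := by
  classical
  induction s using Finset.cons_induction with
  | empty => simp [zero_rpow_of_pos hθ0]
  | cons _ _ _ ih =>
    rw [Finset.sum_cons, Finset.sum_cons]
    exact (rpow_add_le_add_rpow _ _ hθ0.le hθ1).trans (by gcongr)

theorem rpow_tsum_le_tsum_rpow {ι : Type*} (a : ι → ℝ≥0∞) {θ : ℝ} (hθ0 : 0 < θ) (hθ1 : θ ≤ 1) :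
    (∑' i, a i) ^ θ ≤ ∑' i, a i ^ θ := by
  rw [ENNReal.tsum_eq_iSup_sum]
  change orderIsoRpow θ hθ0 (⨆ s : Finset ι, ∑ i ∈ s, a i) ≤ _
  rw [OrderIso.map_iSup]
  exact iSup_le fun s => (rpow_sum_le_sum_rpow a s hθ0 hθ1).trans (ENNReal.sum_le_tsum s)

theorem rpow_sub_one_mul_self (a : ℝ≥0∞) {p : ℝ} (hp : 1 ≤ p) : a ^ (p - 1) * a = a ^ p := by
  conv_rhs => rw [← sub_add_cancel p 1, rpow_add_of_nonneg _ _ (sub_nonneg.2 hp) zero_le_one,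
    rpow_one]

theorem ofReal_rpow_sub_one_mul_rpow_le {u : ℝ} (hu : 0 ≤ u) {b A : ℝ≥0∞} {p : ℝ} (hp : 1 ≤ p)
    (h : ENNReal.ofReal u * b ≤ A) : ENNReal.ofReal (u ^ (p - 1)) * b ^ p ≤ A ^ (p - 1) * b := by
  have hq : 0 ≤ p - 1 := sub_nonneg.2 hp
  calc ENNReal.ofReal (u ^ (p - 1)) * b ^ p = (ENNReal.ofReal u * b) ^ (p - 1) * b := by
        rw [mul_rpow_of_nonneg _ _ hq, ← ofReal_rpow_of_nonneg hu hq, mul_assoc,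
          rpow_sub_one_mul_self b hp]
    _ ≤ A ^ (p - 1) * b := by gcongr

end ENNReal

theorem lintegral_le_lintegral_meas_lt {X : Type*} [MeasurableSpace X] (ν : Measure X)
    {g : X → ℝ≥0∞} (hg : AEMeasurable g ν) :
    ∫⁻ x, g x ∂ν ≤ ∫⁻ t in Ioi 0, ν {x | ENNReal.ofReal t < g x} := by
  by_cases htop : ν {x | g x = ∞} = 0
  · have hfin : g =ᵐ[ν] fun x => ENNReal.ofReal (g x).toReal := by
      filter_upwards [measure_eq_zero_iff_ae_notMem.1 htop] with x hx
      exact (ENNReal.ofReal_toReal hx).symm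
    rw [lintegral_congr_ae hfin, lintegral_eq_lintegral_meas_lt ν
      (ae_of_all _ fun _ => ENNReal.toReal_nonneg) hg.ennreal_toReal]
    refine setLIntegral_mono' measurableSet_Ioi fun t ht => measure_mono fun x hx => ?_
    exact ((ENNReal.ofReal_lt_ofReal_iff_of_nonneg (le_of_lt ht)).2 hx).trans_le
      ENNReal.ofReal_toReal_le
  · calc ∫⁻ x, g x ∂ν ≤ ∫⁻ _ in Ioi (0 : ℝ), ν {x | g x = ∞} := by
          rw [setLIntegral_const, Real.volume_Ioi, ENNReal.mul_top htop]
          exact le_top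
      _ ≤ ∫⁻ t in Ioi 0, ν {x | ENNReal.ofReal t < g x} :=
          lintegral_mono fun t => measure_mono fun x (hx : g x = ∞) => by
            simp [hx]

theorem setLIntegral_le_lintegral_meas_inter_lt {X : Type*} [MeasurableSpace X]
    (μ : Measure X) (f : X → ℝ≥0∞) (E : Set X) :
    ∫⁻ x in E, f x ∂μ ≤ ∫⁻ t in Ioi 0, μ ({x | ENNReal.ofReal t < f x} ∩ E) := by
  obtain ⟨g, hg, hgf, hfg⟩ := exists_measurable_le_lintegral_eq (μ.restrict E) f
  rw [hfg]
  refine (lintegral_le_lintegral_meas_lt _ hg.aemeasurable).trans (lintegral_mono fun t => ?_)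
  rw [Measure.restrict_apply (measurableSet_lt measurable_const hg)]
  exact measure_mono (inter_subset_inter_left _ fun x hx => hx.out.trans_le (hgf x))

theorem lintegral_comp_rpow_Ioi {p : ℝ} (hp : 0 < p) (F : ℝ → ℝ≥0∞) :
    ∫⁻ u in Ioi 0, ENNReal.ofReal (p * u ^ (p - 1)) * F (u ^ p) = ∫⁻ t in Ioi 0, F t := by
  have himage : (· ^ p) '' Ioi (0 : ℝ) = Ioi 0 := by
    ext x
    constructor
    · rintro ⟨y, hy, rfl⟩
      exact Real.rpow_pos_of_pos hy p
    · exact fun hx => ⟨x ^ p⁻¹, Real.rpow_pos_of_pos hx _, Real.rpow_inv_rpow hx.le hp.ne'⟩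
  have := lintegral_image_eq_lintegral_abs_deriv_mul measurableSet_Ioi
    (fun u hu => (Real.hasDerivAt_rpow_const (Or.inl (ne_of_gt hu))).hasDerivWithinAt)
    ((Real.rpow_left_injOn hp.ne').mono Ioi_subset_Ici_self) F
  rw [himage] at this
  rw [this]
  refine setLIntegral_congr_fun measurableSet_Ioi fun u hu => ?_
  rw [abs_of_nonneg (mul_nonneg hp.le (Real.rpow_nonneg (le_of_lt hu) _))]

section Choquet

variable {X : Type*} {ν : Set X → ℝ≥0∞}

theorem Monotone.antitone_superlevel (hν : Monotone ν) (E : Set X) (g : X → ℝ≥0∞) :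
    Antitone fun t : ℝ => ν {x ∈ E | ENNReal.ofReal t < g x} :=
  fun _ _ hst => hν fun _ hx => ⟨hx.1, (ENNReal.ofReal_le_ofReal hst).trans_lt hx.2⟩

theorem ofReal_mul_le_choquetInt (hν : Monotone ν) (E : Set X) (g : X → ℝ≥0∞) (u : ℝ) :
    ENNReal.ofReal u * ν {x ∈ E | ENNReal.ofReal u < g x} ≤ choquetInt ν E g :=
  calc ENNReal.ofReal u * ν {x ∈ E | ENNReal.ofReal u < g x}
      = ∫⁻ _ in Ioc 0 u, ν {x ∈ E | ENNReal.ofReal u < g x} := by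
        rw [setLIntegral_const, Real.volume_Ioc, sub_zero, mul_comm]
    _ ≤ ∫⁻ t in Ioc 0 u, ν {x ∈ E | ENNReal.ofReal t < g x} :=
        setLIntegral_mono' measurableSet_Ioc fun _ ht => hν.antitone_superlevel E g ht.2
    _ ≤ choquetInt ν E g := lintegral_mono_set Ioc_subset_Ioi_self

theorem setLIntegral_le_choquetInt_rpow [MeasurableSpace X] (μ : Measure X) (hν : Monotone ν)
    {p : ℝ} (hp : 1 ≤ p) (hμν : ∀ S, μ S ≤ ν S ^ p) (f : X → ℝ≥0∞) (E : Set X) :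
    ∫⁻ x in E, f x ∂μ ≤ ENNReal.ofReal p * choquetInt ν E (fun x => f x ^ p⁻¹) ^ p := by
  have hp0 : 0 < p := zero_lt_one.trans_le hp
  set g : X → ℝ≥0∞ := fun x => f x ^ p⁻¹
  set A := choquetInt ν E g
  have hlevel : ∀ u : ℝ, 0 ≤ u →
      {x | ENNReal.ofReal (u ^ p) < f x} ∩ E = {x ∈ E | ENNReal.ofReal u < g x} := by
    intro u hu
    ext x
    simp only [mem_inter_iff, mem_ofPred_eq, g, ENNReal.lt_rpow_inv_iff hp0,
      ENNReal.ofReal_rpow_of_nonneg hu hp0.le, and_comm]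
  calc ∫⁻ x in E, f x ∂μ ≤ ∫⁻ t in Ioi 0, μ ({x | ENNReal.ofReal t < f x} ∩ E) :=
        setLIntegral_le_lintegral_meas_inter_lt μ f E
    _ = ∫⁻ u in Ioi 0, ENNReal.ofReal (p * u ^ (p - 1)) * μ {x ∈ E | ENNReal.ofReal u < g x} := by
        rw [← lintegral_comp_rpow_Ioi hp0]
        exact setLIntegral_congr_fun measurableSet_Ioi fun u hu => by rw [hlevel u (le_of_lt hu)]
    _ ≤ ∫⁻ u in Ioi 0, ENNReal.ofReal p * A ^ (p - 1) * ν {x ∈ E | ENNReal.ofReal u < g x} := by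
        refine setLIntegral_mono' measurableSet_Ioi fun u hu => ?_
        rw [ENNReal.ofReal_mul hp0.le, mul_assoc, mul_assoc]
        gcongr ENNReal.ofReal p * ?_
        calc ENNReal.ofReal (u ^ (p - 1)) * μ {x ∈ E | ENNReal.ofReal u < g x}
            ≤ ENNReal.ofReal (u ^ (p - 1)) * ν {x ∈ E | ENNReal.ofReal u < g x} ^ p := by
              gcongr
              exact hμν _
          _ ≤ A ^ (p - 1) * ν {x ∈ E | ENNReal.ofReal u < g x} :=
              ENNReal.ofReal_rpow_sub_one_mul_rpow_le (le_of_lt hu) hp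
                (ofReal_mul_le_choquetInt hν E g u)
    _ = ENNReal.ofReal p * A ^ (p - 1) * A :=
        lintegral_const_mul _ (hν.antitone_superlevel E g).measurable
    _ = ENNReal.ofReal p * A ^ p := by
        rw [mul_assoc, ENNReal.rpow_sub_one_mul_self A hp]

end Choquet

namespace IFS

variable {d m : ℕ} (Φ : IFS d m) (μ : Measure (Pt d)) {s α : ℝ}

theorem hContent_mono : Monotone (Φ.hContent μ s α) := fun _ _ hEF =>
  le_iInf₂ fun C hC => le_iInf fun hcov => (iInf₂_le C hC).trans (iInf_le _ (hEF.trans hcov))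

theorem measure_le_hContent_rpow (hα : 0 < α) (hαs : α ≤ s) (E : Set (Pt d)) :
    μ E ≤ Φ.hContent μ s α E ^ (s / α) := by
  have hθ0 : 0 < α / s := div_pos hα (hα.trans_le hαs)
  have hθ1 : α / s ≤ 1 := div_le_one_of_le₀ hαs (hα.le.trans hαs)
  rw [← inv_div, ENNReal.le_rpow_inv_iff hθ0]
  refine le_iInf₂ fun C hC => le_iInf fun hcov => ?_
  calc μ E ^ (α / s) ≤ (∑' w : C, μ (Φ.cyl w)) ^ (α / s) := by
        gcongr
        exact (measure_mono hcov).trans (measure_biUnion_le μ hC _)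
    _ ≤ ∑' w : C, μ (Φ.cyl w) ^ (α / s) := ENNReal.rpow_tsum_le_tsum_rpow _ hθ0 hθ1

end IFS

theorem integral_le_choquet_general (d m : ℕ) (Φ : IFS d m) (μ : Measure (Pt d)) (s : ℝ)
    (α : ℝ) (hα : 0 < α) (hαs : α ≤ s)
    (f : Pt d → ℝ≥0∞) (I : List (Fin m)) :
    ∫⁻ x in Φ.cyl I, f x ∂μ ≤
      ENNReal.ofReal (s / α) *
        (choquetInt (Φ.hContent μ s α) (Φ.cyl I) fun x => f x ^ (α / s)) ^ (s / α) := by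
  simpa only [inv_div] using setLIntegral_le_choquetInt_rpow μ (Φ.hContent_mono μ)
    ((one_le_div hα).2 hαs) (Φ.measure_le_hContent_rpow μ hα hαs) f (Φ.cyl I)

/-- For any basic cube `I`, `∫_I f dμ ≤ (s/α) (∫_I f^{α/s} dH^α_μ)^{s/α}`. -/
theorem integral_le_choquet (d m : ℕ) (Φ : IFS d m) (p : Fin m → ℝ≥0∞)
    (μ : Measure (Pt d)) (hμ : Φ.SelfSimilar p μ)
    (s : ℝ) (hs : 0 < s) (hdim : ∑ i, Φ.r i ^ s = 1)
    (α : ℝ) (hα : 0 < α) (hαs : α ≤ s)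
    (f : Pt d → ℝ≥0∞) (hf : Measurable f) (I : List (Fin m)) :
    ∫⁻ x in Φ.cyl I, f x ∂μ ≤
      ENNReal.ofReal (s / α) *
        (choquetInt (Φ.hContent μ s α) (Φ.cyl I) fun x => f x ^ (α / s)) ^ (s / α) :=
  integral_le_choquet_general d m Φ μ s α hα hαs f I
end
end
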